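/- arXiv:2209.13253 — 9 statements merged into one kernel-verified Lean document; each statement's English description precedes it below -/
import Mathlib

section
/- Let X be a T0 topological space. A subset U of X is open in the topology determined by the convergence class S_X (where ((x_i), x) ∈ S_X iff there exists a directed set D of eventual lower bounds of (x_i) with D → x in X) if and only if U is directed-open (i.e., for every directed subset D of X converging to some x ∈ U, D meets U). -/
namespace Conv

variable {X : Type}

/-- A directed preorder (index of a net), given as an explicit relation. -/
def DirIdx {I : Type} (r : I → I → Prop) : Prop :=
  Nonempty I ∧ (∀ i, r i i) ∧ (∀ a b c : I, r a b → r b c → r a c) ∧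
    ∀ a b : I, ∃ c, r a c ∧ r b c

/-- Specialization order relative to a family `T` of "open" sets. -/
def sle (T : Set (Set X)) (x y : X) : Prop := ∀ U ∈ T, x ∈ U → y ∈ U

/-- Upper closure of a set w.r.t. the specialization order of `T`. -/
def upset (T : Set (Set X)) (A : Set X) : Set X := {z | ∃ a ∈ A, sle T a z}

/-- `D` is a (nonempty) directed subset w.r.t. the specialization order of `T`. -/
def IsDirSet (T : Set (Set X)) (D : Set X) : Prop := D.Nonempty ∧ DirectedOn (sle T) D

/-- A subset `D` (viewed as a monotone net) converges to `x` w.r.t. `T`. -/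
def DConv (T : Set (Set X)) (D : Set X) (x : X) : Prop :=
  ∀ U ∈ T, x ∈ U → (D ∩ U).Nonempty

/-- `U` is directed-open w.r.t. `T`. -/
def DirOpen (T : Set (Set X)) (U : Set X) : Prop :=
  ∀ D x, IsDirSet T D → DConv T D x → x ∈ U → (D ∩ U).Nonempty

/-- The family of directed-open sets. -/
def DTop (T : Set (Set X)) : Set (Set X) := {U | DirOpen T U}

/-- The family of open sets of a topological space. -/
def opens (X : Type) [TopologicalSpace X] : Set (Set X) := {U | IsOpen U}

/-- Every directed-open set belongs to `T`. -/
def DirT (T : Set (Set X)) : Prop := ∀ U, DirOpen T U → U ∈ T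

/-- A directed space: every directed-open set is open. -/
def IsDirectedSpace (X : Type) [TopologicalSpace X] : Prop := DirT (opens X)

/-- A net is eventually in `U`. -/
def EvIn {I : Type} (r : I → I → Prop) (xi : I → X) (U : Set X) : Prop :=
  ∃ k, ∀ i, r k i → xi i ∈ U

/-- `y` is an eventual lower bound of the net `xi`. -/
def EvLB (T : Set (Set X)) {I : Type} (r : I → I → Prop) (xi : I → X) (y : X) : Prop :=
  ∃ k, ∀ i, r k i → sle T y (xi i)

/-- Topological convergence of a net w.r.t. the family `T` of open sets. -/
def NConv (T : Set (Set X)) {I : Type} (r : I → I → Prop) (xi : I → X) (x : X) : Prop :=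
  ∀ U ∈ T, x ∈ U → EvIn r xi U

/-- `((x_i), x) ∈ S_X`: some directed set of eventual lower bounds converges to `x`. -/
def SConv (T : Set (Set X)) {I : Type} (r : I → I → Prop) (xi : I → X) (x : X) : Prop :=
  ∃ D : Set X, IsDirSet T D ∧ (∀ d ∈ D, EvLB T r xi d) ∧ DConv T D x

/-- `U` is open in the topology determined by `S_X`. -/
def SOpen (T : Set (Set X)) (U : Set X) : Prop :=
  ∀ (I : Type) (r : I → I → Prop), DirIdx r → ∀ (xi : I → X) (x : X),
    SConv T r xi x → x ∈ U → EvIn r xi U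

/-- `y ≪_d x`. -/
def WayBelow (T : Set (Set X)) (y x : X) : Prop :=
  ∀ D : Set X, IsDirSet T D → DConv T D x → ∃ d ∈ D, sle T y d

/-- A continuous space (relative to the family `T`). -/
def IsContinuousT (T : Set (Set X)) : Prop :=
  DirT T ∧ ∀ x : X, IsDirSet T {y | WayBelow T y x} ∧ DConv T {y | WayBelow T y x} x

def IsContinuousSpace (X : Type) [TopologicalSpace X] : Prop := IsContinuousT (opens X)

/-- `G ≪_d H` for subsets. -/
def SWayBelow (T : Set (Set X)) (G H : Set X) : Prop :=
  ∀ (D : Set X) (x : X), IsDirSet T D → DConv T D x → x ∈ H → (D ∩ upset T G).Nonempty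

/-- A directed family of finite sets (ordered by reverse inclusion of upper closures). -/
def IsDirFam (T : Set (Set X)) (F : Set (Set X)) : Prop :=
  F.Nonempty ∧ (∀ A ∈ F, A.Finite) ∧
    ∀ A ∈ F, ∀ B ∈ F, ∃ C ∈ F, upset T C ⊆ upset T A ∧ upset T C ⊆ upset T B

/-- Convergence of a family of finite sets to `x`. -/
def FamConv (T : Set (Set X)) (F : Set (Set X)) (x : X) : Prop :=
  ∀ U ∈ T, x ∈ U → ∃ A ∈ F, upset T A ⊆ U

/-- `fin_d(x)`. -/
def finD (T : Set (Set X)) (x : X) : Set (Set X) := {A | A.Finite ∧ SWayBelow T A {x}}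

def IsQuasicontinuousT (T : Set (Set X)) : Prop :=
  DirT T ∧ ∀ x : X, IsDirFam T (finD T x) ∧ FamConv T (finD T x) x

def IsQuasicontinuousSpace (X : Type) [TopologicalSpace X] : Prop :=
  IsQuasicontinuousT (opens X)

/-- `A` is a quasi eventual lower bound of the net `xi`. -/
def QEvLB (T : Set (Set X)) {I : Type} (r : I → I → Prop) (xi : I → X) (A : Set X) : Prop :=
  A.Finite ∧ ∃ k, ∀ i, r k i → xi i ∈ upset T A

/-- `((x_i), x) ∈ S*_X`. -/
def QSConv (T : Set (Set X)) {I : Type} (r : I → I → Prop) (xi : I → X) (x : X) : Prop :=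
  ∃ F : Set (Set X), IsDirFam T F ∧ (∀ A ∈ F, QEvLB T r xi A) ∧ FamConv T F x

/-- `U` is open in the topology determined by `S*_X`. -/
def QSOpen (T : Set (Set X)) (U : Set X) : Prop :=
  ∀ (I : Type) (r : I → I → Prop), DirIdx r → ∀ (xi : I → X) (x : X),
    QSConv T r xi x → x ∈ U → EvIn r xi U

/-- `x ≡ liminf x_i`. -/
def IsLiminf (T : Set (Set X)) {I : Type} (r : I → I → Prop) (xi : I → X) (x : X) : Prop :=
  (∀ y, EvLB T r xi y → sle T y x) ∧
  (∀ z, (∀ y, EvLB T r xi y → sle T y z) → sle T x z) ∧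
  SConv T r xi x

/-- `f : (J,s) → (I,r)` is a subnet map: monotone and cofinal, with directed domain. -/
def Subnet {I J : Type} (r : I → I → Prop) (s : J → J → Prop) (f : J → I) : Prop :=
  DirIdx s ∧ (∀ a b, s a b → r (f a) (f b)) ∧ ∀ i, ∃ j, r i (f j)

/-- `z` is a cofinal lower bound of the net `xi`. -/
def CofLB (T : Set (Set X)) {I : Type} (r : I → I → Prop) (xi : I → X) (z : X) : Prop :=
  ∀ i, ∃ j, r i j ∧ sle T z (xi j)

/-- `((x_i), x) ∈ L_X`: every subnet has liminf `x`. -/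
def LConv (T : Set (Set X)) {I : Type} (r : I → I → Prop) (xi : I → X) (x : X) : Prop :=
  ∀ (J : Type) (s : J → J → Prop) (f : J → I), Subnet r s f →
    IsLiminf T s (fun j => xi (f j)) x

/-- `U` is open in the liminf topology `L(X)`. -/
def LOpen (T : Set (Set X)) (U : Set X) : Prop :=
  ∀ (I : Type) (r : I → I → Prop), DirIdx r → ∀ (xi : I → X) (x : X),
    LConv T r xi x → x ∈ U → EvIn r xi U

/-- `x ≡_q liminf x_i`. -/
def QLiminf (T : Set (Set X)) {I : Type} (r : I → I → Prop) (xi : I → X) (x : X) : Prop :=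
  QSConv T r xi x ∧ ∀ y, EvLB T r xi y → sle T y x

/-- `((x_i), x) ∈ L*_X`: every subnet quasi-liminf converges to `x`. -/
def QLConv (T : Set (Set X)) {I : Type} (r : I → I → Prop) (xi : I → X) (x : X) : Prop :=
  ∀ (J : Type) (s : J → J → Prop) (f : J → I), Subnet r s f →
    QLiminf T s (fun j => xi (f j)) x

/-- `U` is open in the quasi-liminf topology `L*(X)`. -/
def QLOpen (T : Set (Set X)) (U : Set X) : Prop :=
  ∀ (I : Type) (r : I → I → Prop), DirIdx r → ∀ (xi : I → X) (x : X),
    QLConv T r xi x → x ∈ U → EvIn r xi U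

/-- The Lawson topology: generated by the opens of `X` and complements of
principal upper sets. -/
def lawson (X : Type) [TopologicalSpace X] : Set (Set X) :=
  {U | (TopologicalSpace.generateFrom
      (opens X ∪ {V | ∃ y : X, V = {z : X | sle (opens X) y z}ᶜ})).IsOpen U}

theorem stmt0 (X : Type) [TopologicalSpace X] [T0Space X] (U : Set X) :
    SOpen (opens X) U ↔ DirOpen (opens X) U := by
  constructor
  · intro hS D x hD hC hx
    obtain ⟨⟨d0, hd0⟩, hdir⟩ := hD
    have hidx : DirIdx (fun a b : {d // d ∈ D} => sle (opens X) a.1 b.1) := by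
      refine ⟨⟨⟨d0, hd0⟩⟩, fun i U _ h => h,
        fun a b c hab hbc U hU h => hbc U hU (hab U hU h), fun a b => ?_⟩
      obtain ⟨c, hc, h1, h2⟩ := hdir a.1 a.2 b.1 b.2
      exact ⟨⟨c, hc⟩, h1, h2⟩
    have := hS {d // d ∈ D} (fun a b => sle (opens X) a.1 b.1) hidx
      (fun i => i.1) x
      ⟨D, ⟨⟨d0, hd0⟩, hdir⟩, fun d hd => ⟨⟨d, hd⟩, fun i h => h⟩, hC⟩ hx
    obtain ⟨k, hk⟩ := this
    exact ⟨k.1, k.2, hk k (fun U _ h => h)⟩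
  · rintro hDO I r hr xi x ⟨D, hD, hLB, hC⟩ hx
    obtain ⟨d, hdD, hdU⟩ := hDO D x hD hC hx
    obtain ⟨k, hk⟩ := hLB d hdD
    refine ⟨k, fun i hi => ?_⟩
    have hconv : DConv (opens X) {xi i} d :=
      fun V hV hdV => ⟨xi i, rfl, hk i hi V hV hdV⟩
    have hdirs : IsDirSet (opens X) {xi i} := by
      refine ⟨⟨xi i, rfl⟩, fun a ha b hb => ?_⟩
      rcases ha with rfl; rcases hb with rfl
      exact ⟨xi i, rfl, fun V _ h => h, fun V _ h => h⟩
    obtain ⟨z, hz1, hz2⟩ := hDO {xi i} d hdirs hconv hdU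
    rcases hz1 with rfl
    exact hz2

end Conv
end

section
/- Let X be a T0 space and let D(X) be the topology of directed-open sets on X. Then the specialization order of (X, D(X)) equals the specialization order of X. -/
namespace Conv

variable {X : Type}

theorem stmt2 (X : Type) [TopologicalSpace X] [T0Space X] :
    ∀ x y : X, sle (DTop (opens X)) x y ↔ sle (opens X) x y := by
  intro x y
  constructor
  · intro h U hU hxU
    exact h U (fun D z _ hconv hz => hconv U hU hz) hxU
  · intro h U hU hxU
    have hdir : IsDirSet (opens X) {y} := by
      refine ⟨⟨y, rfl⟩, ?_⟩
      intro a ha b hb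
      exact ⟨y, rfl, by simp_all [sle], by simp_all [sle]⟩
    have hconv : DConv (opens X) {y} x := by
      intro V hV hxV
      exact ⟨y, rfl, h V hV hxV⟩
    obtain ⟨d, hd, hdU⟩ := hU {y} x hdir hconv hxU
    cases hd
    exact hdU

end Conv
end

section
/- Let X be a T0 space with directed-open topology D(X). For any directed subset D of X and any x ∈ X, D converges to x in the original topology of X if and only if D converges to x in the topology D(X). -/
namespace Conv

variable {X : Type}

theorem stmt3 (X : Type) [TopologicalSpace X] [T0Space X] (D : Set X) (x : X)
    (hD : IsDirSet (opens X) D) :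
    DConv (opens X) D x ↔ DConv (DTop (opens X)) D x := by
  constructor
  · intro h U hU hx
    exact hU D x hD h hx
  · intro h U hU hx
    exact h U (fun D' x' _ hc hx' => hc U hU hx') hx

end Conv
end

section
/- For any T0 space X, the space DX = (X, D(X)) equipped with the directed-open topology is a directed space, i.e., every subset of X that is directed-open with respect to D(X) is already in D(X). -/
namespace Conv

variable {X : Type}

theorem stmt4 (X : Type) [TopologicalSpace X] [T0Space X] :
    ∀ U : Set X, DirOpen (DTop (opens X)) U → U ∈ DTop (opens X) := by
  intro U hU
  set T := opens X with hT
  -- sle T a b → sle (DTop T) a b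
  have hsle : ∀ a b : X, sle T a b → sle (DTop T) a b := by
    intro a b hab V hV haV
    have hdir : IsDirSet T {b} :=
      ⟨⟨b, rfl⟩, fun x hx y hy => ⟨b, rfl, by
        rw [Set.mem_singleton_iff] at hx hy
        subst hx; subst hy; exact ⟨fun U _ h => h, fun U _ h => h⟩⟩⟩
    have hconv : DConv T {b} a := fun W hW haW => ⟨b, rfl, hab W hW haW⟩
    obtain ⟨c, hc, hcV⟩ := hV {b} a hdir hconv haV
    rwa [Set.mem_singleton_iff.mp hc] at hcV
  intro D x hD hconv hx
  have hD' : IsDirSet (DTop T) D := by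
    obtain ⟨hne, hdir⟩ := hD
    refine ⟨hne, fun p hp q hq => ?_⟩
    obtain ⟨c, hc, hpc, hqc⟩ := hdir p hp q hq
    exact ⟨c, hc, hsle _ _ hpc, hsle _ _ hqc⟩
  have hconv' : DConv (DTop T) D x := fun V hV hxV => hV D x hD hconv hxV
  exact hU D x hD' hconv' hx

end Conv
end

section
/- Let X be a continuous space (a directed space in which for every x the set ⇓x = {y : y ≪_d x} is directed and converges to x). Then a net (x_i) converges topologically to x if and only if there exists a directed set D of eventual lower bounds of (x_i) with D → x. In particular, S_X-convergence is topological. -/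
namespace Conv

variable {X : Type}

lemma sle_refl' (T : Set (Set X)) (x : X) : sle T x x := fun _ _ h => h

lemma sle_trans' {T : Set (Set X)} {a b c : X} (h1 : sle T a b) (h2 : sle T b c) :
    sle T a c := fun U hU ha => h2 U hU (h1 U hU ha)

lemma singleton_dir (T : Set (Set X)) (x : X) : IsDirSet T {x} := by
  refine ⟨⟨x, rfl⟩, ?_⟩
  intro a ha b hb
  rw [Set.mem_singleton_iff] at ha hb
  subst ha; subst hb
  exact ⟨_, rfl, sle_refl' T _, sle_refl' T _⟩

lemma singleton_conv (T : Set (Set X)) (z : X) : DConv T {z} z :=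
  fun _ _ hz => ⟨z, rfl, hz⟩

lemma wb_sle {T : Set (Set X)} {y x : X} (h : WayBelow T y x) : sle T y x := by
  obtain ⟨d, hd, hs⟩ := h {x} (singleton_dir T x) (singleton_conv T x)
  rw [Set.mem_singleton_iff] at hd
  subst hd; exact hs

lemma wb_mono_right {T : Set (Set X)} {y x x' : X} (h : WayBelow T y x) (hs : sle T x x') :
    WayBelow T y x' :=
  fun D hD hc => h D hD (fun U hU hxU => hc U hU (hs U hU hxU))

lemma wb_mono_left {T : Set (Set X)} {y' y x : X} (hs : sle T y' y) (h : WayBelow T y x) :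
    WayBelow T y' x := by
  intro D hD hc
  obtain ⟨d, hd, hs2⟩ := h D hD hc
  exact ⟨d, hd, sle_trans' hs hs2⟩

lemma wayBelowOpen {T : Set (Set X)} (hc : IsContinuousT T) (y : X) :
    DirOpen T {x | WayBelow T y x} := by
  intro D x hD hconv hx
  set E : Set X := {e | ∃ d ∈ D, WayBelow T e d} with hE
  have hEdir : IsDirSet T E := by
    constructor
    · obtain ⟨d, hd⟩ := hD.1
      obtain ⟨e, he⟩ := (hc.2 d).1.1
      exact ⟨e, d, hd, he⟩
    · rintro e1 ⟨d1, hd1, h1⟩ e2 ⟨d2, hd2, h2⟩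
      obtain ⟨d3, hd3, s1, s2⟩ := hD.2 d1 hd1 d2 hd2
      obtain ⟨e3, he3, t1, t2⟩ := (hc.2 d3).1.2 e1 (wb_mono_right h1 s1) e2 (wb_mono_right h2 s2)
      exact ⟨e3, ⟨d3, hd3, he3⟩, t1, t2⟩
  have hEconv : DConv T E x := by
    intro U hU hxU
    obtain ⟨d, hdD, hdU⟩ := hconv U hU hxU
    obtain ⟨e, heWB, heU⟩ := (hc.2 d).2 U hU hdU
    exact ⟨e, ⟨d, hdD, heWB⟩, heU⟩
  obtain ⟨e, ⟨d, hdD, hwb⟩, hye⟩ := hx E hEdir hEconv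
  exact ⟨d, hdD, wb_mono_left hye hwb⟩

theorem stmt6 (X : Type) [TopologicalSpace X] [T0Space X]
    (h : IsContinuousSpace X) :
    ∀ (I : Type) (r : I → I → Prop), DirIdx r → ∀ (xi : I → X) (x : X),
      NConv (opens X) r xi x ↔ SConv (opens X) r xi x := by
  intro I r _hr xi x
  constructor
  · intro hN
    refine ⟨{y | WayBelow (opens X) y x}, (h.2 x).1, ?_, (h.2 x).2⟩
    intro y hy
    have hopen : {z | WayBelow (opens X) y z} ∈ opens X := h.1 _ (wayBelowOpen h y)
    obtain ⟨k, hk⟩ := hN _ hopen hy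
    exact ⟨k, fun i hi => wb_sle (hk i hi)⟩
  · rintro ⟨D, _hDdir, hEvLB, hDconv⟩
    intro U hU hxU
    obtain ⟨d, hdD, hdU⟩ := hDconv U hU hxU
    obtain ⟨k, hk⟩ := hEvLB d hdD
    exact ⟨k, fun i hi => hk i hi U hU hdU⟩

end Conv
end

section
/- Let X be a directed space. If the convergence class S_X is topological (i.e., S_X equals the class of all topologically convergent net-point pairs for some topology, equivalently for the topology it determines), then X is a continuous space: for every x ∈ X there is a directed set D with D → x and x ∈ int(↑d) for every d ∈ D. -/
namespace Conv

variable {X : Type}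

theorem stmt7 (X : Type) [TopologicalSpace X] [T0Space X]
    (hd : IsDirectedSpace X)
    (ht : ∀ (I : Type) (r : I → I → Prop), DirIdx r → ∀ (xi : I → X) (x : X),
      SConv (opens X) r xi x ↔ NConv {U | SOpen (opens X) U} r xi x) :
    ∀ x : X, ∃ D : Set X, IsDirSet (opens X) D ∧ DConv (opens X) D x ∧
      ∀ d ∈ D, x ∈ interior {z : X | sle (opens X) d z} := by
  classical
  intro x
  have sle_refl : ∀ y : X, sle (opens X) y y := fun y U _ h => h
  -- every SOpen set is open
  have hSsub : ∀ U : Set X, SOpen (opens X) U → U ∈ opens X := by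
    intro U hU
    apply hd
    intro D y hD hconv hyU
    obtain ⟨d0, hd0⟩ := hD.1
    have hdir : DirIdx (fun a b : {d // d ∈ D} => sle (opens X) a.1 b.1) := by
      refine ⟨⟨⟨d0, hd0⟩⟩, fun a => sle_refl a.1,
        fun a b c hab hbc V hV ha => hbc V hV (hab V hV ha), ?_⟩
      intro a b
      obtain ⟨c, hc, hac, hbc⟩ := hD.2 a.1 a.2 b.1 b.2
      exact ⟨⟨c, hc⟩, hac, hbc⟩
    have hS : SConv (opens X) (fun a b : {d // d ∈ D} => sle (opens X) a.1 b.1)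
        (fun a => a.1) y := by
      refine ⟨D, hD, ?_, hconv⟩
      intro d hdD
      exact ⟨⟨d, hdD⟩, fun i hi => hi⟩
    obtain ⟨k, hk⟩ := hU _ _ hdir _ y hS hyU
    exact ⟨k.1, k.2, hk k (sle_refl k.1)⟩
  -- the canonical net converging to x
  let I := {p : Set X × X // p.1 ∈ opens X ∧ x ∈ p.1 ∧ p.2 ∈ p.1}
  let r : I → I → Prop := fun p q => q.1.1 ⊆ p.1.1
  have hIdir : DirIdx r := by
    refine ⟨⟨⟨(Set.univ, x), isOpen_univ, trivial, trivial⟩⟩, fun p => subset_rfl,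
      fun a b c h1 h2 => h2.trans h1, ?_⟩
    intro a b
    exact ⟨⟨(a.1.1 ∩ b.1.1, x), a.2.1.inter b.2.1, ⟨a.2.2.1, b.2.2.1⟩,
      a.2.2.1, b.2.2.1⟩, Set.inter_subset_left, Set.inter_subset_right⟩
  let xi : I → X := fun p => p.1.2
  have hN : NConv {U | SOpen (opens X) U} r xi x := by
    intro U hU hxU
    have hUopen : U ∈ opens X := hSsub U hU
    exact ⟨⟨(U, x), hUopen, hxU, hxU⟩, fun i hi => hi i.2.2.2⟩
  obtain ⟨D, hDdir, hlb, hconv⟩ := (ht I r hIdir xi x).mpr hN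
  refine ⟨D, hDdir, hconv, ?_⟩
  intro d hdD
  obtain ⟨k, hk⟩ := hlb d hdD
  have hsub : k.1.1 ⊆ {z : X | sle (opens X) d z} := by
    intro b hb
    exact hk ⟨(k.1.1, b), k.2.1, k.2.2.1, hb⟩ subset_rfl
  exact interior_maximal hsub k.2.1 k.2.2.1

end Conv
end

section
/- Let X be a T0 space. Then the topology S*(X) determined by the convergence class S*_X equals the topology S(X) determined by S_X, and both equal the directed-open topology D(X). -/
namespace Conv

variable {X : Type}

/-!
Every `S`-convergent net is `S*`-convergent (take singletons), and a directed set converging to `x`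
is itself an `S`-convergent net, so `S*`-open ⇒ `S`-open ⇒ directed-open. Conversely, let `U` be
directed-open and let a net `S*`-converge to `x ∈ U` while being frequently outside `U`. Then every
quasi eventual lower bound `F` of the net meets the complement of `U` (an upper set), and Rudin's
lemma gives a directed set outside `U` meeting every such `F`; it converges to `x`, contradicting
directed-openness.
-/

/-- The Smyth preorder on subsets. -/
def SmythLE {α : Type*} (r : α → α → Prop) (A B : Set α) : Prop := ∀ b ∈ B, ∃ a ∈ A, r a b

/-- The sets over which Zorn's lemma is applied in the proof of Rudin's lemma. -/
def RudinSet {α : Type*} (r : α → α → Prop) (G : Set (Set α)) (M : Set α) : Prop :=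
  (∀ A ∈ G, (M ∩ A).Nonempty) ∧ ∀ A ∈ G, ∀ B ∈ G, SmythLE r A B → SmythLE r (M ∩ A) (M ∩ B)

section Rudin

variable {α : Type*} {r : α → α → Prop} {G : Set (Set α)}

theorem IsChain.sInter_inter_nonempty {c : Set (Set α)} (hc : IsChain (· ⊆ ·) c)
    (hcne : c.Nonempty) {A : Set α} (hA : A.Finite) (h : ∀ M ∈ c, (M ∩ A).Nonempty) :
    (⋂₀ c ∩ A).Nonempty := by
  have htraces : ((· ∩ A) '' c).Finite :=
    hA.finite_subsets.subset (by rintro _ ⟨M, -, rfl⟩; exact Set.inter_subset_right)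
  obtain ⟨M₀, hM₀, hmin⟩ := Set.Finite.exists_minimalFor' (· ∩ A) c htraces hcne
  obtain ⟨m, hmM₀, hmA⟩ := h M₀ hM₀
  refine ⟨m, fun M hM => ?_, hmA⟩
  rcases hc.total hM₀ hM with hle | hle
  · exact hle hmM₀
  · exact (hmin hM (Set.inter_subset_inter_left A hle) ⟨hmM₀, hmA⟩).1

theorem rudinSet_sUnion (hne : ∀ A ∈ G, A.Nonempty) : RudinSet r G (⋃₀ G) := by
  refine ⟨fun A hA => ?_, fun A hA B _ hAB m hm => ?_⟩
  · obtain ⟨a, ha⟩ := hne A hA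
    exact ⟨a, ⟨A, hA, ha⟩, ha⟩
  · obtain ⟨a, haA, ham⟩ := hAB m hm.2
    exact ⟨a, ⟨⟨A, hA, haA⟩, haA⟩, ham⟩

theorem rudinSet_sInter (hfin : ∀ A ∈ G, A.Finite) {c : Set (Set α)}
    (hcG : ∀ M ∈ c, RudinSet r G M) (hc : IsChain (· ⊆ ·) c) (hcne : c.Nonempty) :
    RudinSet r G (⋂₀ c) := by
  refine ⟨fun A hA =>
    IsChain.sInter_inter_nonempty hc hcne (hfin A hA) fun M hM => (hcG M hM).1 A hA,
    fun A hA B hB hAB m hm => ?_⟩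
  have hbelow : (⋂₀ c ∩ (A ∩ {a | r a m})).Nonempty := by
    refine IsChain.sInter_inter_nonempty hc hcne ((hfin A hA).subset Set.inter_subset_left)
      fun M hM => ?_
    obtain ⟨a, ⟨haM, haA⟩, ham⟩ := (hcG M hM).2 A hA B hB hAB m ⟨hm.1 M hM, hm.2⟩
    exact ⟨a, haM, haA, ham⟩
  obtain ⟨a, haI, haA, ham⟩ := hbelow
  exact ⟨a, ⟨haI, haA⟩, ham⟩

/-- Otherwise the elements of `M` not above `x` would form a smaller `RudinSet`. -/
theorem RudinSet.exists_forall_le_of_minimal [IsPreorder α r] {M : Set α}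
    (hM : Minimal (RudinSet r G) M) {x : α} (hx : x ∈ M) :
    ∃ F ∈ G, ∀ m ∈ M ∩ F, r x m := by
  by_contra! hcon
  have hsmaller : RudinSet r G {m ∈ M | ¬ r x m} := by
    refine ⟨fun A hA => ?_, fun A hA B hB hAB m ⟨⟨hmM, hxm⟩, hmB⟩ => ?_⟩
    · obtain ⟨m, ⟨hmM, hmA⟩, hxm⟩ := hcon A hA
      exact ⟨m, ⟨hmM, hxm⟩, hmA⟩
    · obtain ⟨a, ⟨haM, haA⟩, ham⟩ := hM.prop.2 A hA B hB hAB m ⟨hmM, hmB⟩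
      exact ⟨a, ⟨⟨haM, fun hxa => hxm (trans_of r hxa ham)⟩, haA⟩, ham⟩
  exact (hM.2 hsmaller (fun m hm => hm.1) hx).2 (refl_of r x)

theorem RudinSet.directedOn_of_minimal [IsPreorder α r]
    (hdir : ∀ A ∈ G, ∀ B ∈ G, ∃ C ∈ G, SmythLE r A C ∧ SmythLE r B C) {M : Set α}
    (hM : Minimal (RudinSet r G) M) : DirectedOn r M := by
  intro x hx y hy
  obtain ⟨Fx, hFx, hx⟩ := RudinSet.exists_forall_le_of_minimal hM hx
  obtain ⟨Fy, hFy, hy⟩ := RudinSet.exists_forall_le_of_minimal hM hy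
  obtain ⟨C, hC, hFxC, hFyC⟩ := hdir Fx hFx Fy hFy
  obtain ⟨c, hcM, hcC⟩ := hM.prop.1 C hC
  obtain ⟨a, ha, hac⟩ := hM.prop.2 Fx hFx C hC hFxC c ⟨hcM, hcC⟩
  obtain ⟨b, hb, hbc⟩ := hM.prop.2 Fy hFy C hC hFyC c ⟨hcM, hcC⟩
  exact ⟨c, hcM, trans_of r (hx a ha) hac, trans_of r (hy b hb) hbc⟩

theorem rudin [IsPreorder α r] (hG : G.Nonempty) (hfin : ∀ A ∈ G, A.Finite)
    (hne : ∀ A ∈ G, A.Nonempty)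
    (hdir : ∀ A ∈ G, ∀ B ∈ G, ∃ C ∈ G, SmythLE r A C ∧ SmythLE r B C) :
    ∃ M ⊆ ⋃₀ G, M.Nonempty ∧ DirectedOn r M ∧ ∀ A ∈ G, (M ∩ A).Nonempty := by
  obtain ⟨M, hMsub, hM⟩ := zorn_superset_nonempty {M | RudinSet r G M}
    (fun c hcG hc hcne => ⟨⋂₀ c, rudinSet_sInter hfin hcG hc hcne,
      fun _ hM => Set.sInter_subset_of_mem hM⟩) _ (rudinSet_sUnion hne)
  obtain ⟨A, hA⟩ := hG
  exact ⟨M, hMsub, (hM.prop.1 A hA).mono Set.inter_subset_left,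
    RudinSet.directedOn_of_minimal hdir hM, hM.prop.1⟩

end Rudin

section DirectedOpen

variable {T : Set (Set X)} {U : Set X}

instance : IsPreorder X (sle T) where
  refl _ _ _ hx := hx
  trans _ _ _ hxy hyz V hV hx := hyz V hV (hxy V hV hx)

theorem mem_upset_singleton {d z : X} : z ∈ upset T {d} ↔ sle T d z := by
  simp [upset]

theorem smythLE_of_upset_subset {A C : Set X} (h : upset T C ⊆ upset T A) :
    SmythLE (sle T) A C :=
  fun c hc => h ⟨c, hc, refl_of (sle T) c⟩

theorem isDirSet_singleton (z : X) : IsDirSet T {z} :=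
  ⟨Set.singleton_nonempty z, directedOn_singleton z⟩

theorem DirOpen.mem_of_sle (hU : DirOpen T U) {d z : X} (hd : d ∈ U) (hdz : sle T d z) :
    z ∈ U := by
  obtain ⟨w, rfl, hw⟩ :=
    hU {z} d (isDirSet_singleton z) (fun V hV hdV => ⟨z, rfl, hdz V hV hdV⟩) hd
  exact hw

theorem IsDirSet.dirIdx {D : Set X} (hD : IsDirSet T D) :
    DirIdx (fun a b : D => sle T a b) := by
  obtain ⟨⟨d, hd⟩, hdir⟩ := hD
  refine ⟨⟨⟨d, hd⟩⟩, fun a => refl_of (sle T) a.1, fun _ _ _ => trans_of (sle T), fun a b => ?_⟩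
  obtain ⟨c, hc, hac, hbc⟩ := hdir a.1 a.2 b.1 b.2
  exact ⟨⟨c, hc⟩, hac, hbc⟩

theorem SConv.qsConv {I : Type} {r : I → I → Prop} {xi : I → X} {x : X}
    (h : SConv T r xi x) : QSConv T r xi x := by
  obtain ⟨D, ⟨hDne, hDdir⟩, hlb, hDx⟩ := h
  refine ⟨(fun d => {d}) '' D, ⟨hDne.image _, ?_, ?_⟩, ?_, ?_⟩
  · rintro _ ⟨d, -, rfl⟩
    exact Set.finite_singleton d
  · rintro _ ⟨a, ha, rfl⟩ _ ⟨b, hb, rfl⟩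
    obtain ⟨c, hc, hac, hbc⟩ := hDdir a ha b hb
    refine ⟨{c}, ⟨c, hc, rfl⟩, fun z hz => ?_, fun z hz => ?_⟩ <;>
      rw [mem_upset_singleton] at hz ⊢
    exacts [trans_of (sle T) hac hz, trans_of (sle T) hbc hz]
  · rintro _ ⟨d, hd, rfl⟩
    obtain ⟨k, hk⟩ := hlb d hd
    exact ⟨Set.finite_singleton d, k, fun i hki => mem_upset_singleton.2 (hk i hki)⟩
  · intro V hV hxV
    obtain ⟨d, hd, hdV⟩ := hDx V hV hxV
    exact ⟨{d}, ⟨d, hd, rfl⟩, fun z hz => mem_upset_singleton.1 hz V hV hdV⟩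

theorem QSOpen.sOpen (h : QSOpen T U) : SOpen T U :=
  fun I r hr xi x hx => h I r hr xi x hx.qsConv

theorem SOpen.dirOpen (h : SOpen T U) : DirOpen T U := by
  intro D x hD hDx hxU
  obtain ⟨k, hk⟩ := h D (fun a b => sle T a b) hD.dirIdx Subtype.val x
    ⟨D, hD, fun d hd => ⟨⟨d, hd⟩, fun _ hdi => hdi⟩, hDx⟩ hxU
  exact ⟨k.1, k.2, hk k (refl_of (sle T) k.1)⟩

theorem IsDirFam.exists_isDirSet_disjoint {F : Set (Set X)} (hF : IsDirFam T F)
    (hU : ∀ a b, a ∈ U → sle T a b → b ∈ U) (hne : ∀ A ∈ F, (A \ U).Nonempty) :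
    ∃ M, IsDirSet T M ∧ Disjoint M U ∧ ∀ A ∈ F, (M ∩ A).Nonempty := by
  obtain ⟨hFne, hFfin, hFdir⟩ := hF
  have hrefine : ∀ A C, upset T C ⊆ upset T A → SmythLE (sle T) (A \ U) (C \ U) := by
    intro A C hCA c hc
    obtain ⟨a, ha, hac⟩ := smythLE_of_upset_subset hCA c hc.1
    exact ⟨a, ⟨ha, fun haU => hc.2 (hU a c haU hac)⟩, hac⟩
  obtain ⟨M, hMsub, hMne, hMdir, hMmeet⟩ := rudin (r := sle T) (G := (· \ U) '' F)
    (hFne.image _) (by rintro _ ⟨A, hA, rfl⟩; exact (hFfin A hA).sdiff)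
    (by rintro _ ⟨A, hA, rfl⟩; exact hne A hA)
    (by
      rintro _ ⟨A, hA, rfl⟩ _ ⟨B, hB, rfl⟩
      obtain ⟨C, hC, hCA, hCB⟩ := hFdir A hA B hB
      exact ⟨C \ U, ⟨C, hC, rfl⟩, hrefine A C hCA, hrefine B C hCB⟩)
  refine ⟨M, ⟨hMne, hMdir⟩, Set.disjoint_left.2 fun m hm hmU => ?_, fun A hA => ?_⟩
  · obtain ⟨_, ⟨A, -, rfl⟩, hmA⟩ := hMsub hm
    exact hmA.2 hmU
  · obtain ⟨m, hmM, hmA, -⟩ := hMmeet (A \ U) ⟨A, hA, rfl⟩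
    exact ⟨m, hmM, hmA⟩

theorem DirOpen.qsOpen (hU : DirOpen T U) : QSOpen T U := by
  intro I r _ xi x ⟨F, hF, hqlb, hFx⟩ hxU
  show ∃ k, ∀ i, r k i → xi i ∈ U
  by_contra! hfreq
  have hne : ∀ A ∈ F, (A \ U).Nonempty := by
    intro A hA
    obtain ⟨k, hk⟩ := (hqlb A hA).2
    obtain ⟨i, hki, hiU⟩ := hfreq k
    obtain ⟨a, ha, hai⟩ := hk i hki
    exact ⟨a, ha, fun haU => hiU (hU.mem_of_sle haU hai)⟩
  obtain ⟨M, hM, hMU, hMmeet⟩ :=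
    hF.exists_isDirSet_disjoint (fun _ _ ha hab => hU.mem_of_sle ha hab) hne
  have hMx : DConv T M x := by
    intro V hV hxV
    obtain ⟨A, hA, hAV⟩ := hFx V hV hxV
    obtain ⟨m, hmM, hmA⟩ := hMmeet A hA
    exact ⟨m, hmM, hAV ⟨m, hmA, refl_of (sle T) m⟩⟩
  obtain ⟨m, hmM, hmU⟩ := hU M x hM hMx hxU
  exact Set.disjoint_left.1 hMU hmM hmU

end DirectedOpen

theorem stmt12_general (X : Type) [TopologicalSpace X] :
    ∀ U : Set X, (QSOpen (opens X) U ↔ SOpen (opens X) U) ∧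
      (SOpen (opens X) U ↔ DirOpen (opens X) U) :=
  fun _ => ⟨⟨QSOpen.sOpen, fun h => h.dirOpen.qsOpen⟩, ⟨SOpen.dirOpen, fun h => h.qsOpen.sOpen⟩⟩

theorem stmt12 (X : Type) [TopologicalSpace X] [T0Space X] :
    ∀ U : Set X, (QSOpen (opens X) U ↔ SOpen (opens X) U) ∧
      (SOpen (opens X) U ↔ DirOpen (opens X) U) :=
  stmt12_general X

end Conv
end

section
/- Let X be a T0 space, x ∈ X, and (x_i)_{i∈I} a net in X. Then the following are equivalent: (1) x ≡ liminf y_j for every subnet (y_j) of (x_i); (2) x ≡ liminf x_i and every cofinal lower bound z of (x_i) satisfies z ⊑ x. -/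
namespace Conv

variable {X : Type}

theorem stmt15 (X : Type) [TopologicalSpace X] [T0Space X]
    (I : Type) (r : I → I → Prop) (hr : DirIdx r) (xi : I → X) (x : X) :
    (∀ (J : Type) (s : J → J → Prop) (f : J → I), Subnet r s f →
        IsLiminf (opens X) s (fun j => xi (f j)) x) ↔
      (IsLiminf (opens X) r xi x ∧
        ∀ z : X, CofLB (opens X) r xi z → sle (opens X) z x) := by
  constructor
  · intro h
    constructor
    · exact h I r id ⟨hr, fun a b hab => hab, fun i => ⟨i, hr.2.1 i⟩⟩
    · intro z hz
      obtain ⟨⟨i0⟩, hrefl, htrans, hdir⟩ := hr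
      obtain ⟨j0, hj0, hz0⟩ := hz i0
      have hsub : Subnet r (fun a b : {j : I // sle (opens X) z (xi j)} => r a.1 b.1)
          Subtype.val := by
        refine ⟨⟨⟨⟨j0, hz0⟩⟩, fun a => hrefl a.1,
          fun a b c hab hbc => htrans _ _ _ hab hbc, ?_⟩, fun a b hab => hab, ?_⟩
        · intro a b
          obtain ⟨c, hac, hbc⟩ := hdir a.1 b.1
          obtain ⟨j, hcj, hzj⟩ := hz c
          exact ⟨⟨j, hzj⟩, htrans _ _ _ hac hcj, htrans _ _ _ hbc hcj⟩
        · intro i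
          obtain ⟨j, hij, hzj⟩ := hz i
          exact ⟨⟨j, hzj⟩, hij⟩
      exact (h _ _ _ hsub).1 z ⟨⟨j0, hz0⟩, fun j _ => j.2⟩
  · rintro ⟨⟨h1, h2, D, hD, hDlb, hDc⟩, hcof⟩ J s f ⟨⟨⟨j0⟩, hsref, hstr, hsdir⟩, hmono, hcofin⟩
    have key : ∀ y, EvLB (opens X) r xi y → EvLB (opens X) s (fun j => xi (f j)) y := by
      intro y hy
      obtain ⟨k, hk⟩ := hy
      obtain ⟨j1, hj1⟩ := hcofin k
      exact ⟨j1, fun j hj => hk _ (hr.2.2.1 _ _ _ hj1 (hmono _ _ hj))⟩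
    refine ⟨?_, ?_, D, hD, fun d hd => key d (hDlb d hd), hDc⟩
    · intro y hy
      obtain ⟨k, hk⟩ := hy
      apply hcof
      intro i
      obtain ⟨j1, hj1⟩ := hcofin i
      obtain ⟨c, hkc, hj1c⟩ := hsdir k j1
      exact ⟨f c, hr.2.2.1 _ _ _ hj1 (hmono _ _ hj1c), hk c hkc⟩
    · intro z hz
      exact h2 z (fun y hy => hz y (key y hy))

end Conv
end

section
/- Let X be a directed space. Then the Lawson topology λ(X) (generated by the open sets of X together with the complements of principal upper sets ↑y) is coarser than the liminf topology L(X), the topology determined by the convergence class L_X. -/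
namespace Conv

variable {X : Type}

theorem stmt16 (X : Type) [TopologicalSpace X] [T0Space X]
    (hd : IsDirectedSpace X) :
    ∀ U ∈ lawson X, LOpen (opens X) U := by
  intro U hU
  have h : TopologicalSpace.GenerateOpen
      (opens X ∪ {V | ∃ y : X, V = {z : X | sle (opens X) y z}ᶜ}) U := hU
  clear hU
  induction h with
  | basic V hV =>
    intro I r hr xi x hL hx
    rcases hV with hV | ⟨y, rfl⟩
    · -- V is open in X
      have hid : Subnet r r id := ⟨hr, fun _ _ h => h, fun i => ⟨i, hr.2.1 i⟩⟩
      obtain ⟨D, hD, hlb, hconv⟩ := (hL I r id hid).2.2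
      obtain ⟨d, hdD, hdV⟩ := hconv V hV hx
      obtain ⟨k, hk⟩ := hlb d hdD
      exact ⟨k, fun i hi => hk i hi V hV hdV⟩
    · -- complement of an upper set
      by_contra hne
      have hcof : ∀ k : I, ∃ i, r k i ∧ sle (opens X) y (xi i) := by
        intro k
        by_contra hk
        push_neg at hk
        exact hne ⟨k, fun i hi => hk i hi⟩
      set J := {i : I // sle (opens X) y (xi i)} with hJ
      have hs : DirIdx (fun a b : J => r a.1 b.1) := by
        obtain ⟨k0⟩ := hr.1
        obtain ⟨i0, _, hi0⟩ := hcof k0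
        refine ⟨⟨⟨i0, hi0⟩⟩, fun a => hr.2.1 a.1,
          fun a b c hab hbc => hr.2.2.1 _ _ _ hab hbc, fun a b => ?_⟩
        obtain ⟨c, hac, hbc⟩ := hr.2.2.2 a.1 b.1
        obtain ⟨j, hcj, hj⟩ := hcof c
        exact ⟨⟨j, hj⟩, hr.2.2.1 _ _ _ hac hcj, hr.2.2.1 _ _ _ hbc hcj⟩
      have hsub : Subnet r (fun a b : J => r a.1 b.1) (fun a => a.1) :=
        ⟨hs, fun _ _ h => h, fun i => by
          obtain ⟨j, hij, hj⟩ := hcof i; exact ⟨⟨j, hj⟩, hij⟩⟩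
      obtain ⟨j0⟩ := hs.1
      have hyx : sle (opens X) y x :=
        (hL J _ _ hsub).1 y ⟨j0, fun j _ => j.2⟩
      exact hx hyx
  | univ =>
    intro I r hr xi x _ _
    obtain ⟨k⟩ := hr.1
    exact ⟨k, fun _ _ => trivial⟩
  | inter A B _ _ ihA ihB =>
    intro I r hr xi x hL hx
    obtain ⟨k1, h1⟩ := ihA I r hr xi x hL hx.1
    obtain ⟨k2, h2⟩ := ihB I r hr xi x hL hx.2
    obtain ⟨k, hk1, hk2⟩ := hr.2.2.2 k1 k2
    exact ⟨k, fun i hi =>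
      ⟨h1 i (hr.2.2.1 _ _ _ hk1 hi), h2 i (hr.2.2.1 _ _ _ hk2 hi)⟩⟩
  | sUnion S _ ih =>
    intro I r hr xi x hL hx
    obtain ⟨V, hVS, hxV⟩ := hx
    obtain ⟨k, hk⟩ := ih V hVS I r hr xi x hL hxV
    exact ⟨k, fun i hi => ⟨V, hVS, hk i hi⟩⟩

end Conv
end
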